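/- Let $G \in \mathbb{R}^{n \times n}$ be symmetric, $H \in \mathbb{R}^{T \times n}$, $\mu > 0$, and suppose the block matrix $\begin{bmatrix} G & H^\top \\ H & \mu I_T \end{bmatrix}$ is positive semidefinite. Further let $\Gamma, \Xi \in \mathbb{R}^{n \times T}$ with $\Gamma\Gamma^\top \preceq \Xi\Xi^\top$, and let $K \in \mathbb{R}^{n \times n}$, $\varepsilon > 0$, $\pi > 0$, $P \succ 0$ such that $G = -\varepsilon P^{-1} - K H - H^\top K^\top - \mu \Xi\Xi^\top - \pi I_n$. Then $(K - \Gamma) H + H^\top (K - \Gamma)^\top + \pi I_n \preceq -\varepsilon P^{-1}$. -/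

import Mathlib

/-!
Compressing the block inequality by `[I Γ]` gives `G + Γ H + Hᵀ Γᵀ + μ Γ Γᵀ ⪰ 0`, the matrix
Young bound on the cross term `Γ H`. Adding `μ (Ξ Ξᵀ - Γ Γᵀ) ⪰ 0` and unfolding `G`, the sum is
exactly `-ε P⁻¹ - ((K - Γ) H + Hᵀ (K - Γ)ᵀ + π I)`.
-/

namespace Matrix

theorem PosSemidef.fromCols_congr_fromBlocks {m p q R : Type*}
    [Fintype m] [Fintype p] [Finite q] [Ring R] [PartialOrder R] [StarRing R]
    {A : Matrix m m R} {B : Matrix m p R} {C : Matrix p m R} {D : Matrix p p R}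
    (h : (fromBlocks A B C D).PosSemidef)
    (X : Matrix q m R) (Y : Matrix q p R) :
    (X * A * Xᴴ + Y * C * Xᴴ + X * B * Yᴴ + Y * D * Yᴴ).PosSemidef := by
  have := h.mul_mul_conjTranspose_same (fromCols X Y)
  rwa [fromCols_mul_fromBlocks, conjTranspose_fromCols_eq_fromRows_conjTranspose,
    fromCols_mul_fromRows, Matrix.add_mul, Matrix.add_mul, ← add_assoc] at this

end Matrix

open Matrix in
theorem data_driven_lmi_implies_decay_general {n T : ℕ}
    (G : Matrix (Fin n) (Fin n) ℝ)
    (H : Matrix (Fin T) (Fin n) ℝ) (μ : ℝ) (hμ : 0 < μ)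
    (hblock : (Matrix.fromBlocks G Hᵀ H (μ • (1 : Matrix (Fin T) (Fin T) ℝ))).PosSemidef)
    (Γ Ξ : Matrix (Fin n) (Fin T) ℝ)
    (hnoise : (Ξ * Ξᵀ - Γ * Γᵀ).PosSemidef)
    (K : Matrix (Fin n) (Fin T) ℝ) (ε π : ℝ)
    (P : Matrix (Fin n) (Fin n) ℝ)
    (hGdef : G = (-ε) • P⁻¹ - K * H - Hᵀ * Kᵀ - μ • (Ξ * Ξᵀ)
        - π • (1 : Matrix (Fin n) (Fin n) ℝ)) :
    ((-ε) • P⁻¹ - ((K - Γ) * H + Hᵀ * (K - Γ)ᵀ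
        + π • (1 : Matrix (Fin n) (Fin n) ℝ))).PosSemidef := by
  have hyoung : (G + Γ * H + Hᵀ * Γᵀ + μ • (Γ * Γᵀ)).PosSemidef := by
    simpa [conjTranspose_eq_transpose_of_trivial, Matrix.mul_assoc] using
      hblock.fromCols_congr_fromBlocks 1 Γ
  have hdecomp : (-ε) • P⁻¹ - ((K - Γ) * H + Hᵀ * (K - Γ)ᵀ
        + π • (1 : Matrix (Fin n) (Fin n) ℝ)) =
      (G + Γ * H + Hᵀ * Γᵀ + μ • (Γ * Γᵀ)) + μ • (Ξ * Ξᵀ - Γ * Γᵀ) := by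
    subst hGdef
    simp only [Matrix.sub_mul, Matrix.mul_sub, transpose_sub, smul_sub]
    abel
  rw [hdecomp]
  exact hyoung.add (hnoise.smul hμ.le)

open Matrix in
/-- Full matrix-analytic content of the data-driven LMI: the block PSD
condition with `G = -ε P⁻¹ - K H - Hᵀ Kᵀ - μ Ξ Ξᵀ - π I`, together with the
noise energy bound `Γ Γᵀ ⪯ Ξ Ξᵀ`, implies the closed-loop decay inequality
`(K - Γ) H + Hᵀ (K - Γ)ᵀ + π I ⪯ -ε P⁻¹`. -/
theorem data_driven_lmi_implies_decay {n T : ℕ}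
    (G : Matrix (Fin n) (Fin n) ℝ) (hG : G.IsSymm)
    (H : Matrix (Fin T) (Fin n) ℝ) (μ : ℝ) (hμ : 0 < μ)
    (hblock : (Matrix.fromBlocks G Hᵀ H (μ • (1 : Matrix (Fin T) (Fin T) ℝ))).PosSemidef)
    (Γ Ξ : Matrix (Fin n) (Fin T) ℝ)
    (hnoise : (Ξ * Ξᵀ - Γ * Γᵀ).PosSemidef)
    (K : Matrix (Fin n) (Fin T) ℝ) (ε π : ℝ) (hε : 0 < ε) (hπ : 0 < π)
    (P : Matrix (Fin n) (Fin n) ℝ) (hP : P.PosDef)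
    (hGdef : G = (-ε) • P⁻¹ - K * H - Hᵀ * Kᵀ - μ • (Ξ * Ξᵀ)
        - π • (1 : Matrix (Fin n) (Fin n) ℝ)) :
    ((-ε) • P⁻¹ - ((K - Γ) * H + Hᵀ * (K - Γ)ᵀ
        + π • (1 : Matrix (Fin n) (Fin n) ℝ))).PosSemidef :=
  data_driven_lmi_implies_decay_general G H μ hμ hblock Γ Ξ hnoise K ε π P hGdef
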